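/- arXiv:1705.04268 — 2 statements merged into one kernel-verified Lean document; each statement's English description precedes it below -/
import Mathlib

section
/- In the ring R, the identity (w8^(q^2) + w8) + (x*w6^(q^2) + x^(q^2)*w6) + (w1*w3^(q^2) + w1^(q^2)*w3) + w2^(q^2+1) = 0 holds; equivalently, writing (f_0, f_1, ..., f_6) = (1, x, w1, w2, w3, w6, w8), one has Σ_{i+j=6} f_i^(q^2) * f_j = 0 in R. (This says that the image of the Ree curve under the map (1 : x : w1 : w2 : w3 : w6 : w8) into P^6 lies on the hypersurface Σ_{i+j=6} X_i^(q^2) X_j = 0.) -/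
noncomputable section

open MvPolynomial

abbrev F := ZMod 3

def q0 (s : ℕ) : ℕ := 3 ^ s
def q (s : ℕ) : ℕ := 3 ^ (2 * s + 1)

def ReeIdeal (s : ℕ) : Ideal (MvPolynomial (Fin 3) F) :=
  Ideal.span
    { X 1 ^ q s - X 1 - X 0 ^ q0 s * (X 0 ^ q s - X 0),
      X 2 ^ q s - X 2 - X 0 ^ q0 s * (X 1 ^ q s - X 1) }

abbrev R (s : ℕ) : Type := MvPolynomial (Fin 3) F ⧸ ReeIdeal s

def x (s : ℕ) : R s := Ideal.Quotient.mk _ (X 0)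
def y (s : ℕ) : R s := Ideal.Quotient.mk _ (X 1)
def z (s : ℕ) : R s := Ideal.Quotient.mk _ (X 2)

def w1 (s : ℕ) : R s := x s ^ (3 * q0 s + 1) - y s ^ (3 * q0 s)
def w2 (s : ℕ) : R s := x s * y s ^ (3 * q0 s) - z s ^ (3 * q0 s)
def w3 (s : ℕ) : R s := x s * z s ^ (3 * q0 s) - w1 s ^ (3 * q0 s)
def w4 (s : ℕ) : R s := x s * w2 s ^ q0 s - y s * w1 s ^ q0 s
def v (s : ℕ) : R s := x s * w3 s ^ q0 s - z s * w1 s ^ q0 s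
def w5 (s : ℕ) : R s := y s * w3 s ^ q0 s - z s * w2 s ^ q0 s
def w6 (s : ℕ) : R s := v s ^ (3 * q0 s) - w2 s ^ (3 * q0 s) + x s * w4 s ^ (3 * q0 s)
def w7 (s : ℕ) : R s := w2 s + v s
def w8 (s : ℕ) : R s := w5 s ^ (3 * q0 s) + x s * w7 s ^ (3 * q0 s)
def w9 (s : ℕ) : R s := w4 s * w2 s ^ q0 s - y s * w6 s ^ q0 s
def w10 (s : ℕ) : R s := z s * w6 s ^ q0 s - w3 s ^ q0 s * w4 s
def ell (s : ℕ) : R s := x s ^ q s - x s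



lemma h3 (s : ℕ) : (3 : R s) = 0 := by
  have h : ((3 : ℕ) : MvPolynomial (Fin 3) F) = 0 := by
    exact_mod_cast CharP.cast_eq_zero (MvPolynomial (Fin 3) F) 3
  calc (3 : R s) = Ideal.Quotient.mk (ReeIdeal s) ((3 : ℕ) : MvPolynomial (Fin 3) F) := by
        push_cast; rfl
    _ = 0 := by rw [h, map_zero]

lemma faddk (s k : ℕ) (a b : R s) : (a + b) ^ (3 ^ k) = a ^ (3 ^ k) + b ^ (3 ^ k) := by
  induction k generalizing a b with
  | zero => simp
  | succ k ih =>
    rw [pow_succ, pow_mul, pow_mul, pow_mul, ih]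
    set A := a ^ (3 ^ k); set B := b ^ (3 ^ k)
    linear_combination (A ^ 2 * B + A * B ^ 2) * h3 s

lemma fsubk (s k : ℕ) (a b : R s) : (a - b) ^ (3 ^ k) = a ^ (3 ^ k) - b ^ (3 ^ k) := by
  have hodd : Odd (3 ^ k) := Odd.pow (by decide)
  calc (a - b) ^ (3 ^ k) = (a + -b) ^ (3 ^ k) := by rw [sub_eq_add_neg]
    _ = a ^ (3 ^ k) + (-b) ^ (3 ^ k) := faddk s k a (-b)
    _ = a ^ (3 ^ k) - b ^ (3 ^ k) := by rw [hodd.neg_pow b]; ring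

lemma gen1 (s : ℕ) : y s ^ q s - y s - x s ^ q0 s * (x s ^ q s - x s) = 0 := by
  have h : Ideal.Quotient.mk (ReeIdeal s)
      (X 1 ^ q s - X 1 - X 0 ^ q0 s * (X 0 ^ q s - X 0)) = 0 :=
    Ideal.Quotient.eq_zero_iff_mem.mpr (Ideal.subset_span (Set.mem_insert _ _))
  simp only [map_sub, map_mul, map_pow] at h
  exact h

lemma gen2 (s : ℕ) : z s ^ q s - z s - x s ^ q0 s * (y s ^ q s - y s) = 0 := by
  have h : Ideal.Quotient.mk (ReeIdeal s)
      (X 2 ^ q s - X 2 - X 0 ^ q0 s * (X 1 ^ q s - X 1)) = 0 :=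
    Ideal.Quotient.eq_zero_iff_mem.mpr (Ideal.subset_span
      (Set.mem_insert_iff.mpr (Or.inr rfl)))
  simp only [map_sub, map_mul, map_pow] at h
  exact h

lemma hxq (s : ℕ) : x s ^ q s = x s + ell s := by rw [ell]; ring

lemma hyq (s : ℕ) : y s ^ q s = y s + x s ^ q0 s * ell s := by
  have h := gen1 s; rw [ell]; linear_combination h

lemma hzq (s : ℕ) : z s ^ q s = z s + x s ^ q0 s * x s ^ q0 s * ell s := by
  have h1 := gen1 s; have h2 := gen2 s; rw [ell]
  linear_combination h2 + x s ^ q0 s * h1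

-- arithmetic of exponents
lemma e1 (s : ℕ) : q0 s * (3 * q0 s) = q s := by
  rw [q0, q, pow_succ, two_mul, pow_add]; ring

lemma e2 (s : ℕ) : (3 * q0 s) * (3 * q0 s) = q s * 3 := by
  rw [q0, q, pow_succ, two_mul, pow_add]; ring

lemma e3q0 (s : ℕ) : 3 * q0 s = 3 ^ (s + 1) := by
  rw [q0, pow_succ]; ring

-- Frobenius additivity at the needed exponents
lemma fadd3 (s : ℕ) (a b : R s) : (a + b) ^ 3 = a ^ 3 + b ^ 3 := by
  have := faddk s 1 a b; simpa using this

lemma fadd3q0 (s : ℕ) (a b : R s) :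
    (a + b) ^ (3 * q0 s) = a ^ (3 * q0 s) + b ^ (3 * q0 s) := by
  rw [e3q0]; exact faddk s (s + 1) a b

lemma fsub3q0 (s : ℕ) (a b : R s) :
    (a - b) ^ (3 * q0 s) = a ^ (3 * q0 s) - b ^ (3 * q0 s) := by
  rw [e3q0]; exact fsubk s (s + 1) a b

lemma faddq (s : ℕ) (a b : R s) : (a + b) ^ q s = a ^ q s + b ^ q s := by
  rw [q]; exact faddk s (2 * s + 1) a b

lemma fsubq (s : ℕ) (a b : R s) : (a - b) ^ q s = a ^ q s - b ^ q s := by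
  rw [q]; exact fsubk s (2 * s + 1) a b

-- (a^{q0})^{3q0} = a^q
lemma hq0q (s : ℕ) (a : R s) : (a ^ q0 s) ^ (3 * q0 s) = a ^ q s := by
  rw [← pow_mul, e1]

-- (a^{q0})^3 = a^{3q0}
lemma hq03 (s : ℕ) (a : R s) : (a ^ q0 s) ^ 3 = a ^ (3 * q0 s) := by
  rw [← pow_mul, mul_comm]

-- (a^{3q0})^{3q0} = (a^q)^3
lemma h3q03q0 (s : ℕ) (a : R s) : (a ^ (3 * q0 s)) ^ (3 * q0 s) = (a ^ q s) ^ 3 := by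
  rw [← pow_mul, e2, pow_mul]

-- q-power of basic atoms
lemma tP (s : ℕ) : (x s ^ (3 * q0 s)) ^ q s = x s ^ (3 * q0 s) + ell s ^ (3 * q0 s) := by
  rw [pow_right_comm, hxq, fadd3q0]

lemma tQ (s : ℕ) : (y s ^ (3 * q0 s)) ^ q s
    = y s ^ (3 * q0 s) + (x s + ell s) * ell s ^ (3 * q0 s) := by
  rw [pow_right_comm, hyq, fadd3q0, mul_pow, hq0q, hxq]

lemma tT (s : ℕ) : (z s ^ (3 * q0 s)) ^ q s
    = z s ^ (3 * q0 s) + (x s + ell s) * (x s + ell s) * ell s ^ (3 * q0 s) := by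
  rw [pow_right_comm, hzq, fadd3q0, mul_pow, mul_pow, hq0q, hxq]

lemma ty3 (s : ℕ) : (y s ^ 3) ^ q s = y s ^ 3 + x s ^ (3 * q0 s) * ell s ^ 3 := by
  rw [pow_right_comm, hyq, fadd3, mul_pow, hq03]

lemma tz3 (s : ℕ) : (z s ^ 3) ^ q s
    = z s ^ 3 + x s ^ (3 * q0 s) * x s ^ (3 * q0 s) * ell s ^ 3 := by
  rw [pow_right_comm, hzq, fadd3, mul_pow, mul_pow, hq03]

lemma t1 (s : ℕ) : w1 s ^ q s = w1 s + x s ^ (3 * q0 s) * ell s := by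
  rw [w1, pow_succ, fsubq, mul_pow, tP, tQ, hxq]; ring

lemma t2 (s : ℕ) : w2 s ^ q s = w2 s + y s ^ (3 * q0 s) * ell s := by
  rw [w2, fsubq, mul_pow, hxq, tQ, tT]; ring

-- (x^{3q0})^{3q0} = x^3 + ell^3 in R
lemma hP3 (s : ℕ) : (x s ^ (3 * q0 s)) ^ (3 * q0 s) = x s ^ 3 + ell s ^ 3 := by
  rw [h3q03q0, hxq, fadd3]

lemma hQ3 (s : ℕ) : (y s ^ (3 * q0 s)) ^ (3 * q0 s)
    = y s ^ 3 + x s ^ (3 * q0 s) * ell s ^ 3 := by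
  rw [h3q03q0, hyq, fadd3, mul_pow, hq03]

lemma hT3 (s : ℕ) : (z s ^ (3 * q0 s)) ^ (3 * q0 s)
    = z s ^ 3 + x s ^ (3 * q0 s) * x s ^ (3 * q0 s) * ell s ^ 3 := by
  rw [h3q03q0, hzq, fadd3, mul_pow, mul_pow, hq03]

lemma t3 (s : ℕ) : w3 s ^ q s = w3 s + z s ^ (3 * q0 s) * ell s := by
  rw [w3, fsubq, mul_pow, hxq, tT, pow_right_comm (w1 s), t1, fadd3q0, mul_pow, hP3]
  linear_combination ((x s ^ 2 * ell s + x s * ell s ^ 2) * ell s ^ (3 * q0 s)) * h3 s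

lemma r1 (s : ℕ) : w1 s ^ (3 * q0 s) = x s ^ (3 * q0 s) * x s ^ 3 - y s ^ 3 := by
  rw [w1, pow_succ, fsub3q0, mul_pow, hP3, hQ3]; ring

lemma r2 (s : ℕ) : w2 s ^ (3 * q0 s) = x s ^ (3 * q0 s) * y s ^ 3 - z s ^ 3 := by
  rw [w2, fsub3q0, mul_pow, hQ3, hT3]; ring

lemma rv (s : ℕ) : v s ^ (3 * q0 s)
    = x s ^ (3 * q0 s) * w3 s - z s ^ (3 * q0 s) * w1 s := by
  rw [v, fsub3q0, mul_pow, mul_pow, hq0q, hq0q, t3, t1]; ring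

lemma r4 (s : ℕ) : w4 s ^ (3 * q0 s)
    = x s ^ (3 * q0 s) * w2 s - y s ^ (3 * q0 s) * w1 s := by
  rw [w4, fsub3q0, mul_pow, mul_pow, hq0q, hq0q, t2, t1]; ring

lemma r5 (s : ℕ) : w5 s ^ (3 * q0 s)
    = y s ^ (3 * q0 s) * w3 s - z s ^ (3 * q0 s) * w2 s := by
  rw [w5, fsub3q0, mul_pow, mul_pow, hq0q, hq0q, t3, t2]; ring

lemma E6 (s : ℕ) : w6 s
    = x s ^ (3 * q0 s) * w3 s - z s ^ (3 * q0 s) * w1 s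
      - x s ^ (3 * q0 s) * y s ^ 3 + z s ^ 3
      + x s * (x s ^ (3 * q0 s) * w2 s) - x s * (y s ^ (3 * q0 s) * w1 s) := by
  rw [w6, rv, r2, r4]; ring

lemma E8 (s : ℕ) : w8 s
    = y s ^ (3 * q0 s) * w3 s - z s ^ (3 * q0 s) * w2 s
      + x s * (x s ^ (3 * q0 s) * y s ^ 3) - x s * z s ^ 3
      + x s * (x s ^ (3 * q0 s) * w3 s) - x s * (z s ^ (3 * q0 s) * w1 s) := by
  rw [w8, r5, w7, fadd3q0, r2, rv]; ring

lemma hNsplit (s : ℕ) (a : R s) : a ^ (q s ^ 2) = (a ^ q s) ^ q s := by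
  rw [← pow_mul, pow_two]

lemma faddN (s : ℕ) (a b : R s) : (a + b) ^ (q s ^ 2) = a ^ (q s ^ 2) + b ^ (q s ^ 2) := by
  rw [hNsplit, hNsplit, hNsplit, faddq, faddq]

lemma fsubN (s : ℕ) (a b : R s) : (a - b) ^ (q s ^ 2) = a ^ (q s ^ 2) - b ^ (q s ^ 2) := by
  rw [hNsplit, hNsplit, hNsplit, fsubq, fsubq]

lemma u1 (s : ℕ) : x s ^ (q s ^ 2) = x s + ell s + ell s ^ q s := by
  rw [hNsplit, hxq, faddq, hxq]

lemma uP (s : ℕ) : (x s ^ (3 * q0 s)) ^ (q s ^ 2)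
    = x s ^ (3 * q0 s) + ell s ^ (3 * q0 s) + (ell s ^ q s) ^ (3 * q0 s) := by
  rw [hNsplit, tP, faddq, tP, pow_right_comm (ell s)]

lemma uQ (s : ℕ) : (y s ^ (3 * q0 s)) ^ (q s ^ 2)
    = y s ^ (3 * q0 s) + (x s + ell s) * ell s ^ (3 * q0 s)
      + (x s + ell s + ell s ^ q s) * (ell s ^ q s) ^ (3 * q0 s) := by
  rw [hNsplit, tQ, faddq, tQ, mul_pow, faddq, hxq, pow_right_comm (ell s)]

lemma uT (s : ℕ) : (z s ^ (3 * q0 s)) ^ (q s ^ 2)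
    = z s ^ (3 * q0 s) + (x s + ell s) * (x s + ell s) * ell s ^ (3 * q0 s)
      + (x s + ell s + ell s ^ q s) * (x s + ell s + ell s ^ q s)
        * (ell s ^ q s) ^ (3 * q0 s) := by
  rw [hNsplit, tT, faddq, tT, mul_pow, mul_pow, faddq, hxq, pow_right_comm (ell s)]

lemma uy3 (s : ℕ) : (y s ^ 3) ^ (q s ^ 2)
    = y s ^ 3 + x s ^ (3 * q0 s) * ell s ^ 3
      + (x s ^ (3 * q0 s) + ell s ^ (3 * q0 s)) * (ell s ^ q s) ^ 3 := by
  rw [hNsplit, ty3, faddq, ty3, mul_pow, tP, pow_right_comm (ell s)]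

lemma uz3 (s : ℕ) : (z s ^ 3) ^ (q s ^ 2)
    = z s ^ 3 + x s ^ (3 * q0 s) * x s ^ (3 * q0 s) * ell s ^ 3
      + (x s ^ (3 * q0 s) + ell s ^ (3 * q0 s)) * (x s ^ (3 * q0 s) + ell s ^ (3 * q0 s))
        * (ell s ^ q s) ^ 3 := by
  rw [hNsplit, tz3, faddq, tz3, mul_pow, mul_pow, tP, pow_right_comm (ell s)]

lemma uw1 (s : ℕ) : w1 s ^ (q s ^ 2)
    = w1 s + x s ^ (3 * q0 s) * ell s
      + (x s ^ (3 * q0 s) + ell s ^ (3 * q0 s)) * ell s ^ q s := by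
  rw [hNsplit, t1, faddq, t1, mul_pow, tP]

lemma uw2 (s : ℕ) : w2 s ^ (q s ^ 2)
    = w2 s + y s ^ (3 * q0 s) * ell s
      + (y s ^ (3 * q0 s) + (x s + ell s) * ell s ^ (3 * q0 s)) * ell s ^ q s := by
  rw [hNsplit, t2, faddq, t2, mul_pow, tQ]

lemma uw3 (s : ℕ) : w3 s ^ (q s ^ 2)
    = w3 s + z s ^ (3 * q0 s) * ell s
      + (z s ^ (3 * q0 s) + (x s + ell s) * (x s + ell s) * ell s ^ (3 * q0 s))
        * ell s ^ q s := by
  rw [hNsplit, t3, faddq, t3, mul_pow, tT]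

lemma hw1d (s : ℕ) : w1 s = x s ^ (3 * q0 s) * x s - y s ^ (3 * q0 s) := by
  rw [w1, pow_succ]

lemma hw3d (s : ℕ) : w3 s
    = x s * z s ^ (3 * q0 s) - (x s ^ (3 * q0 s) * x s ^ 3 - y s ^ 3) := by
  rw [w3, r1]


set_option maxHeartbeats 1000000 in
theorem stmt0 (s : ℕ) (hs : 1 ≤ s) :
    w8 s ^ (q s ^ 2) + w8 s
      + (x s * w6 s ^ (q s ^ 2) + x s ^ (q s ^ 2) * w6 s)
      + (w1 s * w3 s ^ (q s ^ 2) + w1 s ^ (q s ^ 2) * w3 s)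
      + w2 s ^ (q s ^ 2 + 1) = 0 := by
  rw [pow_succ (w2 s) (q s ^ 2), E8, E6]
  simp only [fsubN, faddN, mul_pow]
  rw [u1, uP, uQ, uT, uy3, uz3, uw1, uw2, uw3]
  simp only [hw1d, w2, hw3d]
  set M := ell s ^ q s with hM
  set P := x s ^ (3 * q0 s) with hPd
  set Q := y s ^ (3 * q0 s) with hQd
  set T := z s ^ (3 * q0 s) with hTd
  set LL := ell s ^ (3 * q0 s) with hLLd
  set MM := M ^ (3 * q0 s) with hMMd
  linear_combination ((1)*(T)^2 + (1)*(M)^2*(T)*(MM) + (2)*(ell s)*(M)*(T)*(MM) + (-1)*(ell s)*(M)^3*(LL)*(MM) + (-1)*(ell s)*(M)^3*(P)*(MM) + (1)*(ell s)^2*(T)*(MM) + (1)*(ell s)^2*(T)*(LL) + (-1)*(ell s)^2*(M)^2*(LL)*(MM) + (-2)*(ell s)^2*(M)^2*(P)*(MM) + (-1)*(ell s)^3*(M)*(P)*(MM) + (1)*(y s)^3*(M)*(MM) + (1)*(y s)^3*(M)*(LL) + (1)*(y s)^3*(M)*(P) + (1)*(y s)^3*(ell s)*(MM) + (1)*(y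 s)^3*(ell s)*(LL) + (1)*(y s)^3*(ell s)*(P) + (2)*(x s)*(M)*(T)*(MM) + (1)*(x s)*(M)*(Q)^2 + (1)*(x s)*(M)^2*(Q)*(MM) + (-2)*(x s)*(M)^3*(LL)*(MM) + (-2)*(x s)*(M)^3*(P)*(MM) + (2)*(x s)*(ell s)*(T)*(MM) + (2)*(x s)*(ell s)*(T)*(LL) + (1)*(x s)*(ell s)*(Q)^2 + (2)*(x s)*(ell s)*(M)*(Q)*(MM) + (1)*(x s)*(ell s)*(M)*(Q)*(LL) + (-3)*(x s)*(ell s)*(M)^2*(LL)*(MM) + (-6)*(x s)*(ell s)*(M)^2*(P)*(MM) + (1)*(x s)*(ell s)^2*(Q)*(MM) + (1)*(x s)*(ell s)^2*(Q)*(LL) + (-6)*(x s)*(ell s)^2*(M)*(P)*(MM) + (-1)*(x s)*(ell s)^2*(M)*(P)*(LL) + (-2)*(x s)*(ell s)^3*(P)*(MM) + (-2)*(x s)*(ell s)^3*(P)*(LL) + (1)*(x s)*(y s)^3*(MM) + (1)*(x s)*(y s)^3*(LL) + (2)*(x s)*(y s)^3*(P) + (1)*(x s)^2*(T)*(MM)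 + (1)*(x s)^2*(T)*(LL) + (1)*(x s)^2*(Q)^2 + (2)*(x s)^2*(M)*(Q)*(MM) + (1)*(x s)^2*(M)*(Q)*(LL) + (-2)*(x s)^2*(M)^2*(LL)*(MM) + (-4)*(x s)^2*(M)^2*(P)*(MM) + (2)*(x s)^2*(ell s)*(Q)*(MM) + (2)*(x s)^2*(ell s)*(Q)*(LL) + (-8)*(x s)^2*(ell s)*(M)*(P)*(MM) + (-1)*(x s)^2*(ell s)*(M)*(P)*(LL) + (-4)*(x s)^2*(ell s)^2*(P)*(MM) + (-4)*(x s)^2*(ell s)^2*(P)*(LL) + (1)*(x s)^3*(Q)*(MM) + (1)*(x s)^3*(Q)*(LL) + (-4)*(x s)^3*(M)*(P)*(MM) + (-1)*(x s)^3*(M)*(P)*(LL) + (-1)*(x s)^3*(M)*(P)^2 + (-4)*(x s)^3*(ell s)*(P)*(MM) + (-4)*(x s)^3*(ell s)*(P)*(LL) + (-1)*(x s)^3*(ell s)*(P)^2 + (-2)*(x s)^4*(P)*(MM) + (-2)*(x s)^4*(P)*(LL) + (-2)*(x s)^4*(P)^2) * h3 s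
end
end

section
/- In the ring R, the following five identities (the 'type 2' Pedersen relations) hold: w4^q - w4 = w2^q0*(x^q - x) - w1^q0*(y^q - y); w5^q - w5 = w3^q0*(y^q - y) - w2^q0*(z^q - z); w7^q - w7 = w2^q0*(y^q - y) - w3^q0*(x^q - x); w9^q - w9 = w2^q0*(w4^q - w4) - w6^q0*(y^q - y); w10^q - w10 = w6^q0*(z^q - z) - w3^q0*(w4^q - w4). -/
noncomputable section

open MvPolynomial

section Helpers

variable (s : ℕ)

lemma three_zero : (3 : R s) = 0 := by
  have h : (3 : MvPolynomial (Fin 3) F) = 0 := by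
    have := CharP.cast_eq_zero (MvPolynomial (Fin 3) F) 3
    simpa using this
  calc (3 : R s) = Ideal.Quotient.mk (ReeIdeal s) 3 := by rw [map_ofNat]
    _ = 0 := by rw [h, map_zero]

lemma fpow_sub (k : ℕ) (a b : R s) : (a - b) ^ 3 ^ k = a ^ 3 ^ k - b ^ 3 ^ k := by
  obtain ⟨a, rfl⟩ := Ideal.Quotient.mk_surjective a
  obtain ⟨b, rfl⟩ := Ideal.Quotient.mk_surjective b
  rw [← map_sub, ← map_pow, ← map_pow, ← map_pow, ← map_sub, sub_pow_char_pow a b k]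

lemma fpow_add (k : ℕ) (a b : R s) : (a + b) ^ 3 ^ k = a ^ 3 ^ k + b ^ 3 ^ k := by
  obtain ⟨a, rfl⟩ := Ideal.Quotient.mk_surjective a
  obtain ⟨b, rfl⟩ := Ideal.Quotient.mk_surjective b
  rw [← map_add, ← map_pow, ← map_pow, ← map_pow, ← map_add, add_pow_char_pow a b 3 k]

lemma t3q0 : 3 * q0 s = 3 ^ (s + 1) := by
  show 3 * 3 ^ s = 3 ^ (s + 1); rw [pow_succ]; ring

lemma fq_sub (a b : R s) : (a - b) ^ q s = a ^ q s - b ^ q s := fpow_sub s (2 * s + 1) a b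
lemma fq_add (a b : R s) : (a + b) ^ q s = a ^ q s + b ^ q s := fpow_add s (2 * s + 1) a b
lemma fq0_sub (a b : R s) : (a - b) ^ q0 s = a ^ q0 s - b ^ q0 s := fpow_sub s s a b
lemma fq0_add (a b : R s) : (a + b) ^ q0 s = a ^ q0 s + b ^ q0 s := fpow_add s s a b
lemma f3q0_sub (a b : R s) : (a - b) ^ (3 * q0 s) = a ^ (3 * q0 s) - b ^ (3 * q0 s) := by
  rw [t3q0]; exact fpow_sub s (s + 1) a b
lemma f3q0_add (a b : R s) : (a + b) ^ (3 * q0 s) = a ^ (3 * q0 s) + b ^ (3 * q0 s) := by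
  rw [t3q0]; exact fpow_add s (s + 1) a b

lemma c1 (a : R s) : (a ^ q0 s) ^ (3 * q0 s) = a ^ q s := by
  rw [← pow_mul, show q0 s * (3 * q0 s) = q s from by show 3^s * (3 * 3^s) = 3^(2*s+1); ring]

lemma c2 (a : R s) : (a ^ (3 * q0 s)) ^ q0 s = a ^ q s := by
  rw [← pow_mul, show (3 * q0 s) * q0 s = q s from by show (3 * 3^s) * 3^s = 3^(2*s+1); ring]

lemma c3 (a : R s) : (a ^ (3 * q0 s)) ^ (3 * q0 s) = (a ^ q s) ^ 3 := by
  rw [← pow_mul, ← pow_mul,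
    show (3 * q0 s) * (3 * q0 s) = q s * 3 from by show (3 * 3^s) * (3 * 3^s) = 3^(2*s+1) * 3; ring]

lemma Dx : x s ^ q s = x s + ell s := by simp only [ell]; ring

lemma Dy : y s ^ q s = y s + x s ^ q0 s * ell s := by
  have h : Ideal.Quotient.mk (ReeIdeal s)
      (X 1 ^ q s - X 1 - X 0 ^ q0 s * (X 0 ^ q s - X 0)) = 0 :=
    Ideal.Quotient.eq_zero_iff_mem.mpr (Ideal.subset_span (Set.mem_insert _ _))
  simp only [map_sub, map_mul, map_pow] at h
  simp only [ell, x, y]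
  linear_combination h

lemma Dz : z s ^ q s = z s + x s ^ q0 s * (x s ^ q0 s * ell s) := by
  have h : Ideal.Quotient.mk (ReeIdeal s)
      (X 2 ^ q s - X 2 - X 0 ^ q0 s * (X 1 ^ q s - X 1)) = 0 :=
    Ideal.Quotient.eq_zero_iff_mem.mpr (Ideal.subset_span (Set.mem_insert_of_mem _ rfl))
  simp only [map_sub, map_mul, map_pow] at h
  have hy := Dy s
  simp only [ell, x, y] at hy
  simp only [ell, x, y, z]
  linear_combination h + (Ideal.Quotient.mk (ReeIdeal s) (X 0)) ^ q0 s * hy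

lemma Dw1 : w1 s ^ q s = w1 s + x s ^ (3 * q0 s) * ell s := by
  simp only [w1]
  rw [fq_sub, pow_succ, mul_pow,
    pow_right_comm (x s) (3 * q0 s) (q s), pow_right_comm (y s) (3 * q0 s) (q s), Dy, Dx]
  simp only [f3q0_add, mul_pow, c1]
  rw [Dx]
  ring

lemma Dw2 : w2 s ^ q s = w2 s + y s ^ (3 * q0 s) * ell s := by
  simp only [w2]
  rw [fq_sub]
  simp only [mul_pow]
  rw [pow_right_comm (y s) (3 * q0 s) (q s), pow_right_comm (z s) (3 * q0 s) (q s), Dy, Dz]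
  simp only [f3q0_add, mul_pow, c1]
  rw [Dx]
  ring

lemma Dw3 : w3 s ^ q s = w3 s + z s ^ (3 * q0 s) * ell s := by
  simp only [w3]
  rw [fq_sub]
  simp only [mul_pow]
  rw [pow_right_comm (z s) (3 * q0 s) (q s), pow_right_comm (w1 s) (3 * q0 s) (q s), Dz, Dw1]
  simp only [f3q0_add, mul_pow, c1, c3]
  rw [Dx]
  ring

lemma Dw4 : w4 s ^ q s = w4 s + w2 s ^ q0 s * ell s - w1 s ^ q0 s * (x s ^ q0 s * ell s) := by
  simp only [w4]
  rw [fq_sub]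
  simp only [mul_pow]
  rw [pow_right_comm (w2 s) (q0 s) (q s), pow_right_comm (w1 s) (q0 s) (q s), Dw2, Dw1]
  simp only [fq0_add, mul_pow, c2]
  rw [Dx, Dy]
  ring

lemma Dv : v s ^ q s = v s + w3 s ^ q0 s * ell s
    - w1 s ^ q0 s * (x s ^ q0 s * (x s ^ q0 s * ell s)) := by
  simp only [v]
  rw [fq_sub]
  simp only [mul_pow]
  rw [pow_right_comm (w3 s) (q0 s) (q s), pow_right_comm (w1 s) (q0 s) (q s), Dw3, Dw1]
  simp only [fq0_add, mul_pow, c2]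
  rw [Dx, Dz]
  ring

lemma Ew1q0 : w1 s ^ q0 s = x s ^ q s * x s ^ q0 s - y s ^ q s := by
  simp only [w1]
  rw [fq0_sub, pow_succ, mul_pow, c2, c2]

lemma Ew2q0 : w2 s ^ q0 s = x s ^ q0 s * y s ^ q s - z s ^ q s := by
  simp only [w2]
  rw [fq0_sub, mul_pow, c2, c2]

lemma Ew3q0 : w3 s ^ q0 s = x s ^ q0 s * z s ^ q s - w1 s ^ q s := by
  simp only [w3]
  rw [fq0_sub, mul_pow, c2, c2]

lemma idA : w3 s ^ q0 s + x s ^ q0 s * (x s ^ q0 s * w1 s ^ q0 s) + x s ^ q0 s * w2 s ^ q0 s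
    = y s ^ (3 * q0 s) := by
  rw [Ew3q0, Ew2q0, Ew1q0, Dw1, Dx]
  simp only [w1]
  ring

lemma idB : w3 s ^ q s + x s ^ q s * (x s ^ q s * w1 s ^ q s) + x s ^ q s * w2 s ^ q s
    = (y s ^ q s) ^ 3 := by
  have h : (w3 s ^ q0 s + x s ^ q0 s * (x s ^ q0 s * w1 s ^ q0 s) + x s ^ q0 s * w2 s ^ q0 s)
      ^ (3 * q0 s) = (y s ^ (3 * q0 s)) ^ (3 * q0 s) := by rw [idA]
  rw [c3] at h
  rw [← h]
  simp only [f3q0_add, mul_pow, c1]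

lemma Dw6 : w6 s ^ q s = w6 s + w4 s ^ (3 * q0 s) * ell s := by
  simp only [w6]
  rw [fq_add, fq_sub]
  simp only [mul_pow]
  rw [pow_right_comm (v s) (3 * q0 s) (q s), pow_right_comm (w2 s) (3 * q0 s) (q s),
    pow_right_comm (w4 s) (3 * q0 s) (q s), Dv, Dw2, Dw4]
  simp only [f3q0_sub, f3q0_add, mul_pow, c1, c3]
  linear_combination (ell s ^ (3 * q0 s)) * idB s + (w4 s ^ (3 * q0 s)) * Dx s
    + (-(ell s ^ (3 * q0 s) * (x s ^ q s * (x s ^ q s * w1 s ^ q s)))) * three_zero s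

end Helpers

theorem stmt6 (s : ℕ) (hs : 1 ≤ s) :
    w4 s ^ q s - w4 s = w2 s ^ q0 s * (x s ^ q s - x s) - w1 s ^ q0 s * (y s ^ q s - y s) ∧
    w5 s ^ q s - w5 s = w3 s ^ q0 s * (y s ^ q s - y s) - w2 s ^ q0 s * (z s ^ q s - z s) ∧
    w7 s ^ q s - w7 s = w2 s ^ q0 s * (y s ^ q s - y s) - w3 s ^ q0 s * (x s ^ q s - x s) ∧
    w9 s ^ q s - w9 s = w2 s ^ q0 s * (w4 s ^ q s - w4 s) - w6 s ^ q0 s * (y s ^ q s - y s) ∧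
    w10 s ^ q s - w10 s = w6 s ^ q0 s * (z s ^ q s - z s) - w3 s ^ q0 s * (w4 s ^ q s - w4 s) := by
  have hE : ell s = x s ^ q s - x s := rfl
  refine ⟨?_, ?_, ?_, ?_, ?_⟩
  · linear_combination Dw4 s + w1 s ^ q0 s * Dy s + w2 s ^ q0 s * hE
  · simp only [w5]
    rw [fq_sub]
    simp only [mul_pow]
    rw [pow_right_comm (w3 s) (q0 s) (q s), pow_right_comm (w2 s) (q0 s) (q s), Dw3, Dw2]
    simp only [fq0_add, mul_pow, c2]
    ring
  · simp only [w7]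
    rw [fq_add]
    linear_combination Dw2 s + Dv s - w2 s ^ q0 s * Dy s - ell s * idA s
      - w3 s ^ q0 s * hE + w3 s ^ q0 s * ell s * three_zero s
  · simp only [w9]
    rw [fq_sub]
    simp only [mul_pow]
    rw [pow_right_comm (w2 s) (q0 s) (q s), pow_right_comm (w6 s) (q0 s) (q s), Dw2, Dw6]
    simp only [fq0_add, mul_pow, c2]
    ring
  · simp only [w10]
    rw [fq_sub]
    simp only [mul_pow]
    rw [pow_right_comm (w6 s) (q0 s) (q s), pow_right_comm (w3 s) (q0 s) (q s), Dw6, Dw3]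
    simp only [fq0_add, mul_pow, c2]
    ring
end
end
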